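/- arXiv:2401.17825 — 2 statements merged into one kernel-verified Lean document; each statement's English description precedes it below -/
import Mathlib

section
/- Let f : ℝ^D → ℝ be C¹ and suppose f(x) = f(U Uᵀ x) for all x ∈ ℝ^D, where U ∈ ℝ^{D×d_e} has orthonormal columns and this representation is minimal (no such representation exists with fewer columns). Then for every vector v ∈ ℝ^D: v is orthogonal to range(U) if and only if ⟨∇f(x), v⟩ = 0 for all x ∈ ℝ^D. -/
/-!
The gradient is everywhere orthogonal to `v` iff `f` is constant on every line in direction `v`.
If `Uᵀ v = 0` then `x ↦ U Uᵀ x` ignores translations along `v`, so `f` is constant along `v`.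
Conversely, if `f` is constant along `v` but `u := Uᵀ v ≠ 0`, let `B` have as columns an
orthonormal basis of `u^⊥`. Then `V := U B` has fewer columns, and `V Vᵀ x = U (Uᵀ x - s u)`
for some scalar `s`. Because `U Uᵀ` is idempotent, `f` sees this point exactly as it sees
`U Uᵀ x - s v`, which is a translate of `U Uᵀ x` along `v`. So `f = f ∘ V Vᵀ`, contradicting
the minimality of `de`.
-/

open Matrix

section Directional

variable {E F : Type*} [NormedAddCommGroup E] [NormedSpace ℝ E]
  [NormedAddCommGroup F] [NormedSpace ℝ F]

theorem forall_fderiv_apply_eq_zero_iff {f : E → F} (hf : Differentiable ℝ f) (v : E) :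
    (∀ x, fderiv ℝ f x v = 0) ↔ ∀ x (t : ℝ), f (x + t • v) = f x := by
  have hline (x : E) (t : ℝ) :
      HasDerivAt (fun s : ℝ => f (x + s • v)) (fderiv ℝ f (x + t • v) v) t := by
    refine (hf _).hasFDerivAt.comp_hasDerivAt t ?_
    simpa using ((hasDerivAt_id t).smul_const v).const_add x
  constructor
  · intro h x t
    have hconst := is_const_of_deriv_eq_zero (fun s => (hline x s).differentiableAt)
      (fun s => by rw [(hline x s).deriv, h]) t 0
    simpa using hconst
  · intro h x
    have hx := hline x 0
    simp only [zero_smul, add_zero, h x] at hx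
    exact hx.unique (hasDerivAt_const 0 (f x))

end Directional

theorem forall_inner_gradient_eq_zero_iff {E : Type*} [NormedAddCommGroup E]
    [InnerProductSpace ℝ E] [CompleteSpace E] {f : E → ℝ} (hf : Differentiable ℝ f) (v : E) :
    (∀ x, inner ℝ (gradient f x) v = 0) ↔ ∀ x (t : ℝ), f (x + t • v) = f x := by
  rw [← forall_fderiv_apply_eq_zero_iff hf]
  simp only [← toDual_gradient, InnerProductSpace.toDual_apply_apply]

section Invariance

variable {R E F X : Type*} [Ring R] [AddCommGroup E] [Module R E] [AddCommGroup F] [Module R F]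

theorem add_smul_eq_of_map_eq_zero {f : E → X} {P : E →ₗ[R] E} (heff : ∀ x, f x = f (P x))
    {v : E} (hv : P v = 0) (x : E) (t : R) : f (x + t • v) = f x := by
  rw [heff, map_add, map_smul, hv, smul_zero, add_zero, ← heff]

theorem apply_sub_smul_eq {f : E → X} {A : F →ₗ[R] E} {A' : E →ₗ[R] F}
    (hA : ∀ y, A' (A y) = y) (heff : ∀ x, f x = f (A (A' x)))
    {v : E} (hv : ∀ x (t : R), f (x + t • v) = f x) (x : E) (s : R) :
    f (A (A' x - s • A' v)) = f x := by
  have hproj : A (A' x - s • A' v) = A (A' (A (A' x) + (-s) • v)) := by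
    rw [map_add, map_smul, hA, neg_smul, ← sub_eq_add_neg]
  rw [hproj, ← heff, hv, ← heff]

end Invariance

theorem Submodule.exists_transpose_mul_self_eq_one_and_starProjection {n : ℕ}
    (K : Submodule ℝ (EuclideanSpace ℝ (Fin n))) :
    ∃ B : Matrix (Fin n) (Fin (Module.finrank ℝ K)) ℝ, Bᵀ * B = 1 ∧
      ∀ y, toLpLin 2 2 B (toLpLin 2 2 Bᵀ y) = K.starProjection y := by
  let b := stdOrthonormalBasis ℝ K
  refine ⟨Matrix.of fun i j => (b j : EuclideanSpace ℝ (Fin n)) i, ?_, fun y => ?_⟩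
  · ext j k
    have hbjk := b.inner_eq_ite j k
    rw [Submodule.coe_inner, EuclideanSpace.inner_eq_star_dotProduct] at hbjk
    simpa [Matrix.mul_apply, Matrix.one_apply, dotProduct, mul_comm] using hbjk
  · rw [K.starProjection_apply, b.orthogonalProjectionOnto_apply_eq_sum]
    ext i
    simp [Matrix.mulVec, dotProduct, EuclideanSpace.inner_eq_star_dotProduct, Finset.sum_apply,
      mul_comm]

theorem exists_lt_of_forall_add_smul_eq {D de : ℕ} {f : EuclideanSpace ℝ (Fin D) → ℝ}
    {U : Matrix (Fin D) (Fin de) ℝ} (hU : Uᵀ * U = 1)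
    (heff : ∀ x, f x = f (toLpLin 2 2 U (toLpLin 2 2 Uᵀ x)))
    {v : EuclideanSpace ℝ (Fin D)} (hv : ∀ x (t : ℝ), f (x + t • v) = f x)
    (hUv : toLpLin 2 2 Uᵀ v ≠ 0) :
    ∃ k < de, ∃ V : Matrix (Fin D) (Fin k) ℝ, Vᵀ * V = 1 ∧
      ∀ x, f x = f (toLpLin 2 2 V (toLpLin 2 2 Vᵀ x)) := by
  set u := toLpLin 2 2 Uᵀ v
  obtain ⟨B, hB, hBproj⟩ := (ℝ ∙ u)ᗮ.exists_transpose_mul_self_eq_one_and_starProjection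
  have hk : Module.finrank ℝ (ℝ ∙ u)ᗮ < de := by
    have hdim := (ℝ ∙ u).finrank_add_finrank_orthogonal
    rw [finrank_span_singleton hUv, finrank_euclideanSpace_fin] at hdim
    omega
  refine ⟨_, hk, U * B, ?_, fun x => ?_⟩
  · rw [transpose_mul, Matrix.mul_assoc, ← Matrix.mul_assoc Uᵀ, hU, Matrix.one_mul, hB]
  · have hUU y : toLpLin 2 2 Uᵀ (toLpLin 2 2 U y) = y := by
      rw [← LinearMap.comp_apply, ← toLpLin_mul_same, hU, toLpLin_one, LinearMap.id_apply]
    obtain ⟨s, hs⟩ := Submodule.mem_span_singleton.mp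
      ((ℝ ∙ u).starProjection_apply_mem (toLpLin 2 2 Uᵀ x))
    rw [transpose_mul, toLpLin_mul_same, toLpLin_mul_same, LinearMap.comp_apply,
      LinearMap.comp_apply, hBproj, Submodule.starProjection_orthogonal_val, ← hs]
    exact (apply_sub_smul_eq hUU heff hv x s).symm

theorem stmt_11 {D de : ℕ} (f : EuclideanSpace ℝ (Fin D) → ℝ)
    (hf : ContDiff ℝ 1 f)
    (U : Matrix (Fin D) (Fin de) ℝ)
    (hU : Uᵀ * U = 1)
    (heff : ∀ x : EuclideanSpace ℝ (Fin D), f x = f (WithLp.toLp 2 (U.mulVec (Uᵀ.mulVec x))))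
    (hmin : ∀ (k : ℕ) (V : Matrix (Fin D) (Fin k) ℝ), k < de → Vᵀ * V = 1 →
      ¬ (∀ x : EuclideanSpace ℝ (Fin D), f x = f (WithLp.toLp 2 (V.mulVec (Vᵀ.mulVec x))))) :
    ∀ v : EuclideanSpace ℝ (Fin D),
      Uᵀ.mulVec v = 0 ↔ ∀ x : EuclideanSpace ℝ (Fin D), (inner ℝ (gradient f x) v : ℝ) = 0 := by
  intro v
  rw [forall_inner_gradient_eq_zero_iff (hf.differentiable one_ne_zero)]
  have hUv : Uᵀ.mulVec v = 0 ↔ toLpLin 2 2 Uᵀ v = 0 := by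
    rw [toLpLin_apply, WithLp.toLp_eq_zero]
  constructor
  · intro hv
    exact add_smul_eq_of_map_eq_zero (P := toLpLin 2 2 U ∘ₗ toLpLin 2 2 Uᵀ) heff
      (by rw [LinearMap.comp_apply, hUv.mp hv, map_zero])
  · intro hv
    by_contra hUv'
    obtain ⟨k, hk, V, hV, hVeff⟩ := exists_lt_of_forall_add_smul_eq hU heff hv (hUv.not.mp hUv')
    exact hmin k V hk hV hVeff
end

section
/- Let A ∈ ℝ^{D×d} be a matrix whose columns span the same subspace as the columns of an orthonormal-column matrix U ∈ ℝ^{D×d_e} (so necessarily d = d_e and A is full column rank), and let f : ℝ^D → ℝ satisfy f(x) = f(U Uᵀ x) for all x. Then for any p ∈ ℝ^D, inf_{y ∈ ℝ^d} f(A y + p) = inf_{x ∈ ℝ^D} f(x). -/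
open Matrix

/-- Identification of `Fin D → ℝ` with `EuclideanSpace ℝ (Fin D)`. -/
noncomputable def toE {D : ℕ} (v : Fin D → ℝ) : EuclideanSpace ℝ (Fin D) :=
  (WithLp.equiv 2 (Fin D → ℝ)).symm v

/-- Identification of `EuclideanSpace ℝ (Fin D)` with `Fin D → ℝ`. -/
noncomputable def ofE {D : ℕ} (v : EuclideanSpace ℝ (Fin D)) : Fin D → ℝ :=
  WithLp.equiv 2 (Fin D → ℝ) v

/-- Choose `y` with `g y = P (x - p)`; idempotency of `P` gives `P (g y + p) = P x`. -/
theorem range_comp_add_eq_range_of_isIdempotentElem {R E F β : Type*} [Ring R] [AddCommGroup E]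
    [Module R E] {P : Module.End R E} (hP : IsIdempotentElem P) {f : E → β}
    (hf : ∀ x, f (P x) = f x) {g : F → E} (hg : Set.range P ⊆ Set.range g) (p : E) :
    Set.range (fun y => f (g y + p)) = Set.range f := by
  refine (Set.range_comp_subset_range _ f).antisymm ?_
  rintro _ ⟨x, rfl⟩
  obtain ⟨y, hy⟩ := hg ⟨x - p, rfl⟩
  have hproj : P (g y + p) = P x := by
    rw [map_add, hy, ← Module.End.mul_apply, hP.eq, map_sub, sub_add_cancel]
  exact ⟨y, show f (g y + p) = f x by rw [← hf, hproj, hf]⟩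

theorem isIdempotentElem_mul_transpose {m n R : Type*} [Fintype m] [DecidableEq m] [Fintype n]
    [Semiring R] {U : Matrix n m R} (hU : Uᵀ * U = 1) : IsIdempotentElem (U * Uᵀ) := by
  rw [IsIdempotentElem, Matrix.mul_assoc, ← Matrix.mul_assoc Uᵀ, hU, Matrix.one_mul]

theorem stmt_14 {D d de : ℕ} (f : EuclideanSpace ℝ (Fin D) → ℝ)
    (U : Matrix (Fin D) (Fin de) ℝ)
    (hU : Uᵀ * U = 1)
    (heff : ∀ x : EuclideanSpace ℝ (Fin D), f x = f (toE (U.mulVec (Uᵀ.mulVec x))))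
    (A : Matrix (Fin D) (Fin d) ℝ)
    (hrange : LinearMap.range (Matrix.toLin' A) = LinearMap.range (Matrix.toLin' U))
    (p : EuclideanSpace ℝ (Fin D)) :
    ⨅ y : Fin d → ℝ, f (toE (A.mulVec y) + p) = ⨅ x : EuclideanSpace ℝ (Fin D), f x := by
  set P := toLpLin 2 2 (U * Uᵀ)
  have hP : IsIdempotentElem P := (isIdempotentElem_mul_transpose hU).map (toLpLinAlgEquiv 2)
  have hf : ∀ x, f (P x) = f x := fun x => by
    rw [heff x, toLpLin_apply, mulVec_mulVec]; rfl
  have hrange_le : LinearMap.range (toLin' (U * Uᵀ)) ≤ LinearMap.range (toLin' A) := by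
    rw [toLin'_mul, hrange]
    exact LinearMap.range_comp_le_range _ _
  have hP_range : Set.range P ⊆ Set.range fun y => toE (A *ᵥ y) := by
    rintro _ ⟨x, rfl⟩
    obtain ⟨y, hy⟩ := hrange_le ⟨WithLp.ofLp x, rfl⟩
    exact ⟨y, congrArg toE hy⟩
  exact congrArg sInf (range_comp_add_eq_range_of_isIdempotentElem hP hf hP_range p)
end
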